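/- arXiv:1205.5420 — 7 statements merged into one kernel-verified Lean document; each statement's English description precedes it below -/
import Mathlib

section
/- Fix integers a, b, e with a ≥ 0, b ≥ 0, a + b > 0 and e ≥ aq + bm + (m−1)(q−1) − 1. Then the multiplication map L(aq+bm) ⊗ L(e) → L((e+aq+bm)) is surjective; equivalently, L(aq+bm)·L(e) = L(e+aq+bm). -/
open Polynomial

noncomputable section

/-- The affine coordinate ring `R = F[x][y]/(y^q + y - f(x))` of the
Artin-Schreier curve `y^q + y = f(x)`, as a quotient of `F[x][y]`. -/
abbrev ASRing (F : Type*) [Field F] (q : ℕ) (f : F[X]) : Type _ :=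
  AdjoinRoot ((X : (F[X])[X]) ^ q + X - C f)

/-- The image of `x` in `R`. -/
def ASx (F : Type*) [Field F] (q : ℕ) (f : F[X]) : ASRing F q f :=
  AdjoinRoot.of _ X

/-- The image of `y` in `R`. -/
def ASy (F : Type*) [Field F] (q : ℕ) (f : F[X]) : ASRing F q f :=
  AdjoinRoot.root _

/-- `L(s)`: the `F`-linear span in `R` of the monomials `x^i * y^j` with
`i ≥ 0`, `0 ≤ j ≤ q - 1` and `q*i + m*j ≤ s`. -/
def Lspace (F : Type*) [Field F] (q : ℕ) (f : F[X]) (m s : ℕ) :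
    Submodule F (ASRing F q f) :=
  Submodule.span F {r | ∃ i j : ℕ, j ≤ q - 1 ∧ q * i + m * j ≤ s ∧
    r = ASx F q f ^ i * ASy F q f ^ j}

namespace ASaux
variable {F : Type*} [Field F] {q : ℕ} {f : F[X]} {m : ℕ}

lemma y_pow_q : ASy F q f ^ q = AdjoinRoot.of _ f - ASy F q f := by
  have h := AdjoinRoot.eval₂_root ((X : (F[X])[X]) ^ q + X - C f)
  simp [eval₂_sub, eval₂_add, eval₂_pow, eval₂_X, eval₂_C] at h
  rw [ASy]
  linear_combination h

lemma of_g_eq (g : F[X]) : AdjoinRoot.of ((X : (F[X])[X]) ^ q + X - C f) g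
    = ∑ d ∈ Finset.range (g.natDegree + 1), g.coeff d • ASx F q f ^ d := by
  conv_lhs => rw [g.as_sum_range' (g.natDegree + 1) (Nat.lt_succ_self _)]
  rw [map_sum]
  refine Finset.sum_congr rfl fun d _ => ?_
  rw [← C_mul_X_pow_eq_monomial, map_mul, map_pow]
  rw [show AdjoinRoot.of ((X : (F[X])[X]) ^ q + X - C f) (C (g.coeff d))
      = algebraMap F _ (g.coeff d) from rfl, ← Algebra.smul_def]
  rfl

lemma key_exp (i t : ℕ) :
    ASx F q f ^ i * ASy F q f ^ (q + t) =
      (∑ d ∈ Finset.range (f.natDegree + 1),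
        f.coeff d • (ASx F q f ^ (i + d) * ASy F q f ^ t))
      - ASx F q f ^ i * ASy F q f ^ (t + 1) := by
  have h1 : ASy F q f ^ q = AdjoinRoot.of _ f - ASy F q f := y_pow_q
  have h2 : (∑ d ∈ Finset.range (f.natDegree + 1), f.coeff d • ASx F q f ^ d)
        * (ASx F q f ^ i * ASy F q f ^ t)
      = ∑ d ∈ Finset.range (f.natDegree + 1),
        f.coeff d • (ASx F q f ^ (i + d) * ASy F q f ^ t) := by
    rw [Finset.sum_mul]
    refine Finset.sum_congr rfl fun d _ => ?_
    rw [smul_mul_assoc, pow_add]; ring_nf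
  rw [← h2, ← of_g_eq, pow_add (ASy F q f) q t, h1]
  ring

lemma gen_mem {s i j : ℕ} (hj : j ≤ q - 1) (hle : q * i + m * j ≤ s) :
    ASx F q f ^ i * ASy F q f ^ j ∈ Lspace F q f m s :=
  Submodule.subset_span ⟨i, j, hj, hle, rfl⟩

lemma mul_L (hq2 : 2 ≤ q) (hm : m = f.natDegree) {S i1 j1 i2 j2 : ℕ}
    (hj1 : j1 ≤ q - 1) (hj2 : j2 ≤ q - 1)
    (hS : q * i1 + m * j1 + (q * i2 + m * j2) ≤ S) :
    (ASx F q f ^ i1 * ASy F q f ^ j1) * (ASx F q f ^ i2 * ASy F q f ^ j2)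
      ∈ Lspace F q f m S := by
  have hx : (ASx F q f ^ i1 * ASy F q f ^ j1) * (ASx F q f ^ i2 * ASy F q f ^ j2)
      = ASx F q f ^ (i1 + i2) * ASy F q f ^ (j1 + j2) := by
    rw [pow_add, pow_add]; ring
  have htot : q * (i1 + i2) + m * (j1 + j2) = q * i1 + m * j1 + (q * i2 + m * j2) := by
    ring
  rw [hx]
  by_cases hc : j1 + j2 ≤ q - 1
  · exact gen_mem hc (by omega)
  · set t := j1 + j2 - q with ht
    have hqt : j1 + j2 = q + t := by omega
    have hmq : m * (j1 + j2) = m * q + m * t := by rw [hqt]; ring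
    have hmt1 : m * (t + 1) ≤ m * (q + t) := Nat.mul_le_mul_left m (by omega)
    have hmt : m * (q + t) = m * q + m * t := by ring
    rw [hqt, key_exp]
    refine sub_mem (Submodule.sum_mem _ fun d hd => Submodule.smul_mem _ _ ?_)
      (gen_mem (by omega) (by omega))
    have hdm : d ≤ m := by
      rw [hm]; exact Nat.lt_succ_iff.mp (Finset.mem_range.mp hd)
    have e1 : q * (i1 + i2 + d) = q * (i1 + i2) + q * d := by ring
    have e2 : q * d ≤ q * m := Nat.mul_le_mul_left q hdm
    have e3 : q * m = m * q := by ring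
    exact gen_mem (by omega) (by omega)

lemma uniq (hq1 : 1 ≤ q) (hcop : Nat.Coprime m q) {I J I' J' : ℕ}
    (hJ : J < q) (hJ' : J' < q) (h : q * I + m * J = q * I' + m * J') :
    I = I' ∧ J = J' := by
  have hmod : m * J ≡ m * J' [MOD q] := by
    have h2 := congrArg (· % q) h
    simpa [Nat.ModEq, Nat.mul_add_mod] using h2
  have hJJ : J = J' := by
    have h3 := Nat.ModEq.cancel_left_of_coprime (Nat.Coprime.symm hcop) hmod
    rwa [Nat.ModEq, Nat.mod_eq_of_lt hJ, Nat.mod_eq_of_lt hJ'] at h3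
  subst hJJ
  have h7 : q * I = q * I' := by omega
  exact ⟨Nat.eq_of_mul_eq_mul_left (by omega) h7, rfl⟩

lemma frob (hq2 : 2 ≤ q) (hm2 : 2 ≤ m) (hcop : Nat.Coprime m q) {n : ℕ}
    (hn : (m - 1) * (q - 1) ≤ n) : ∃ I J, J < q ∧ q * I + m * J = n := by
  haveI : NeZero q := ⟨by omega⟩
  set u : ZMod q := (n : ZMod q) * ((m : ZMod q))⁻¹ with hu
  set J : ℕ := u.val with hJdef
  have hJ : J < q := ZMod.val_lt u
  have hmu : ((m * J : ℕ) : ZMod q) = (n : ZMod q) := by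
    push_cast
    rw [hJdef, ZMod.natCast_val, ZMod.cast_id, hu,
      show (m : ZMod q) * ((n : ZMod q) * ((m : ZMod q))⁻¹)
        = (m : ZMod q) * ((m : ZMod q))⁻¹ * (n : ZMod q) by ring,
      ZMod.coe_mul_inv_eq_one m hcop, one_mul]
  have hmodeq : m * J ≡ n [MOD q] := (ZMod.natCast_eq_natCast_iff _ _ _).mp hmu
  obtain ⟨c, hc⟩ := Nat.modEq_iff_dvd.mp hmodeq
  have hJint : (J : ℤ) ≤ (q : ℤ) - 1 := by omega
  have h3 : (m : ℤ) * J ≤ (m : ℤ) * ((q : ℤ) - 1) :=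
    mul_le_mul_of_nonneg_left hJint (by positivity)
  have h4 : ((m : ℤ) - 1) * ((q : ℤ) - 1) ≤ (n : ℤ) := by
    have h5 : ((m - 1) * (q - 1) : ℕ) = ((m:ℕ) - 1) * ((q:ℕ) - 1) := rfl
    have h6 := hn
    zify [show (1:ℕ) ≤ m by omega, show (1:ℕ) ≤ q by omega] at h6
    exact h6
  have hc0 : 0 ≤ c := by
    by_contra hneg
    push_neg at hneg
    have h1 : c ≤ -1 := by omega
    have h2 : (q : ℤ) * c ≤ (q : ℤ) * (-1) :=
      mul_le_mul_of_nonneg_left h1 (by positivity)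
    have hexp : ((m : ℤ) - 1) * ((q : ℤ) - 1) = m * q - m - q + 1 := by ring
    have hexp2 : (m : ℤ) * ((q : ℤ) - 1) = m * q - m := by ring
    have hcast : ((m * J : ℕ) : ℤ) = (m : ℤ) * J := by push_cast; ring
    rw [hcast] at hc
    linarith
  refine ⟨c.toNat, J, hJ, ?_⟩
  have hfin : (q : ℤ) * (c.toNat : ℤ) + (m : ℤ) * J = (n : ℤ) := by
    rw [Int.toNat_of_nonneg hc0]
    have hcast : ((m * J : ℕ) : ℤ) = (m : ℤ) * J := by push_cast; ring
    rw [hcast] at hc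
    linarith
  exact_mod_cast hfin

end ASaux

namespace ASaux
variable {F : Type*} [Field F] {q : ℕ} {f : F[X]} {m : ℕ}

lemma main_mem (hq2 : 2 ≤ q) (hm : m = f.natDegree) (hm2 : 2 ≤ m)
    (hcop : Nat.Coprime m q) (hlead : f.coeff f.natDegree ≠ 0)
    (a b e : ℕ) (he : a * q + b * m + (m - 1) * (q - 1) ≤ e + 1) (n : ℕ) :
    ∀ I J : ℕ, J ≤ q - 1 → q * I + m * J = n → n ≤ e + a * q + b * m →
      ASx F q f ^ I * ASy F q f ^ J ∈
        Lspace F q f m (a * q + b * m) * Lspace F q f m e := by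
  induction n using Nat.strong_induction_on with
  | _ n ih =>
  intro I J hJ hn hle
  by_cases hne : n ≤ e
  · have h1 : (1 : ASRing F q f) ∈ Lspace F q f m (a * q + b * m) := by
      have := gen_mem (q := q) (f := f) (m := m) (s := a * q + b * m) (i := 0) (j := 0)
        (Nat.zero_le _) (by omega)
      simpa using this
    have h2 : ASx F q f ^ I * ASy F q f ^ J ∈ Lspace F q f m e :=
      gen_mem hJ (by omega)
    simpa using Submodule.mul_mem_mul h1 h2
  · have hns : a * q + b * m ≤ n := by omega
    obtain ⟨I2, J2, hJ2, hrep⟩ := frob hq2 hm2 hcop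
      (show (m - 1) * (q - 1) ≤ n - (a * q + b * m) by omega)
    obtain ⟨i1, hi1⟩ : ∃ x, x = a + m * (b / q) := ⟨_, rfl⟩
    obtain ⟨j1, hj1def⟩ : ∃ x, x = b % q := ⟨_, rfl⟩
    have hs : q * i1 + m * j1 = a * q + b * m := by
      have hb := Nat.div_add_mod b q
      rw [hi1, hj1def]
      calc q * (a + m * (b / q)) + m * (b % q)
          = a * q + m * (q * (b / q) + b % q) := by ring
        _ = a * q + m * b := by rw [hb]
        _ = a * q + b * m := by ring
    have hj1 : j1 ≤ q - 1 := by
      have := Nat.mod_lt b (show 0 < q by omega); omega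
    have hrep' : q * I2 + m * J2 + (a * q + b * m) = n := by omega
    have htot : q * (i1 + I2) + m * (j1 + J2) = n := by
      have hx : q * (i1 + I2) + m * (j1 + J2)
          = (q * i1 + m * j1) + (q * I2 + m * J2) := by ring
      omega
    by_cases hsm : j1 + J2 ≤ q - 1
    · obtain ⟨hI, hJeq⟩ := uniq (by omega) hcop (show J < q by omega)
        (show j1 + J2 < q by omega) (by rw [hn]; exact htot.symm)
      rw [hI, hJeq, pow_add, pow_add, mul_mul_mul_comm]
      exact Submodule.mul_mem_mul (gen_mem hj1 hs.le)
        (gen_mem (by omega) (by omega))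
    · obtain ⟨t, htdef⟩ : ∃ x, x = j1 + J2 - q := ⟨_, rfl⟩
      have hqt : j1 + J2 = q + t := by omega
      have ht1 : t + 1 ≤ q - 1 := by omega
      have heq : q * (i1 + I2 + m) + m * t = q * I + m * J := by
        have h8 : q * (i1 + I2 + m) + m * t = q * (i1 + I2) + m * (q + t) := by ring
        rw [h8, ← hqt, htot, hn]
      obtain ⟨hI, hJeq⟩ := uniq (by omega) hcop (show t < q by omega)
        (show J < q by omega) heq
      have hn2 : q * (i1 + I2) + m * (q + t) = n := by rw [← hqt]; exact htot
      have hkey := key_exp (f := f) (q := q) (i1 + I2) t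
      rw [Finset.sum_range_succ] at hkey
      have hmain : f.coeff f.natDegree •
            (ASx F q f ^ (i1 + I2 + f.natDegree) * ASy F q f ^ t)
          = ASx F q f ^ (i1 + I2) * ASy F q f ^ (q + t)
            + ASx F q f ^ (i1 + I2) * ASy F q f ^ (t + 1)
            - ∑ d ∈ Finset.range f.natDegree,
                f.coeff d • (ASx F q f ^ (i1 + I2 + d) * ASy F q f ^ t) := by
        linear_combination -hkey
      have hP1 : ASx F q f ^ (i1 + I2) * ASy F q f ^ (q + t) ∈
          Lspace F q f m (a * q + b * m) * Lspace F q f m e := by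
        rw [show q + t = j1 + J2 from hqt.symm, pow_add, pow_add, mul_mul_mul_comm]
        exact Submodule.mul_mem_mul (gen_mem hj1 hs.le)
          (gen_mem (by omega) (by omega))
      have h9 : m * (t + 1) + m * (q - 1) = m * (q + t) := by
        rw [← Nat.mul_add]; congr 1; omega
      have h10 : 0 < m * (q - 1) := Nat.mul_pos (by omega) (by omega)
      have hP2 : ASx F q f ^ (i1 + I2) * ASy F q f ^ (t + 1) ∈
          Lspace F q f m (a * q + b * m) * Lspace F q f m e :=
        ih (q * (i1 + I2) + m * (t + 1)) (by omega) (i1 + I2) (t + 1) ht1 rfl (by omega)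
      have hP3 : (∑ d ∈ Finset.range f.natDegree,
            f.coeff d • (ASx F q f ^ (i1 + I2 + d) * ASy F q f ^ t)) ∈
          Lspace F q f m (a * q + b * m) * Lspace F q f m e := by
        refine Submodule.sum_mem _ fun d hd => Submodule.smul_mem _ _ ?_
        have hdm : d < m := by rw [hm]; exact Finset.mem_range.mp hd
        have e1 : q * (i1 + I2 + d) + q * (m - d) = q * (i1 + I2 + m) := by
          rw [← Nat.mul_add]; congr 1; omega
        have e2 : 0 < q * (m - d) := Nat.mul_pos (by omega) (by omega)
        have e3 : q * (i1 + I2 + m) + m * t = n := by rw [heq, hn]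
        exact ih (q * (i1 + I2 + d) + m * t) (by omega) (i1 + I2 + d) t (by omega)
          rfl (by omega)
      have hP : f.coeff f.natDegree •
          (ASx F q f ^ (i1 + I2 + f.natDegree) * ASy F q f ^ t) ∈
          Lspace F q f m (a * q + b * m) * Lspace F q f m e := by
        rw [hmain]; exact sub_mem (add_mem hP1 hP2) hP3
      have hfin := Submodule.smul_mem
        (Lspace F q f m (a * q + b * m) * Lspace F q f m e)
        (f.coeff f.natDegree)⁻¹ hP
      rw [inv_smul_smul₀ hlead] at hfin
      rw [hm] at hI
      rw [← hI, ← hJeq]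
      exact hfin

end ASaux

theorem stmt_2 (p k q : ℕ) (hp : p.Prime) (hk : 1 ≤ k) (hq : q = p ^ k)
    (F : Type*) [Field F] [CharP F p]
    (f : F[X]) (m : ℕ) (hm : m = f.natDegree) (hm2 : 2 ≤ m) (hmp : Nat.Coprime m p)
    (a b e : ℕ) (hab : 0 < a + b) (he : a * q + b * m + (m - 1) * (q - 1) ≤ e + 1) :
    Lspace F q f m (a * q + b * m) * Lspace F q f m e =
      Lspace F q f m (e + a * q + b * m) := by
  have hq2 : 2 ≤ q := by
    subst hq
    calc 2 ≤ p := hp.two_le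
      _ ≤ p ^ k := Nat.le_self_pow (by omega) p
  have hcop : Nat.Coprime m q := by subst hq; exact hmp.pow_right k
  have hf0 : f ≠ 0 := fun h => by simp [h] at hm; omega
  have hlead : f.coeff f.natDegree ≠ 0 := Polynomial.leadingCoeff_ne_zero.mpr hf0
  apply le_antisymm
  · rw [Lspace, Lspace, Submodule.span_mul_span]
    refine Submodule.span_le.mpr ?_
    rintro z ⟨z1, ⟨i1, j1, hj1, h1, rfl⟩, z2, ⟨i2, j2, hj2, h2, rfl⟩, rfl⟩
    simp only [SetLike.mem_coe]
    exact ASaux.mul_L hq2 hm hj1 hj2 (by omega)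
  · conv_lhs => rw [Lspace]
    refine Submodule.span_le.mpr ?_
    rintro z ⟨I, J, hJ, hle, rfl⟩
    simp only [SetLike.mem_coe]
    exact ASaux.main_mem hq2 hm hm2 hcop hlead a b e (by omega)
      (q * I + m * J) I J hJ rfl (by omega)
end
end

section
/- If s is an integer with s ≥ m, then L(q)·L(sq) = L((s+1)q); that is, the multiplication map L(q) ⊗ L(sq) → L((s+1)q) is surjective. -/
open Polynomial

noncomputable section

section Aux

variable (F : Type*) [Field F] (q : ℕ) (f : F[X]) (m : ℕ)

lemma pow_mem_L {i j s : ℕ} (hj : j ≤ q - 1) (hw : q * i + m * j ≤ s) :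
    ASx F q f ^ i * ASy F q f ^ j ∈ Lspace F q f m s :=
  Submodule.subset_span ⟨i, j, hj, hw, rfl⟩

lemma smul_x_pow (c : F) (t : ℕ) :
    AdjoinRoot.of ((X : (F[X])[X]) ^ q + X - C f) (Polynomial.monomial t c)
      = c • ASx F q f ^ t := by
  rw [← C_mul_X_pow_eq_monomial, map_mul, map_pow, Algebra.smul_def,
    AdjoinRoot.algebraMap_eq']
  rfl

lemma poly_mul_mem {g : F[X]} {i j s : ℕ} (hj : j ≤ q - 1)
    (hw : q * (g.natDegree + i) + m * j ≤ s) :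
    AdjoinRoot.of _ g * (ASx F q f ^ i * ASy F q f ^ j) ∈ Lspace F q f m s := by
  have hg : AdjoinRoot.of ((X : (F[X])[X]) ^ q + X - C f) g
      = ∑ t ∈ Finset.range (g.natDegree + 1),
          AdjoinRoot.of _ (Polynomial.monomial t (g.coeff t)) := by
    conv_lhs => rw [g.as_sum_range]
    rw [map_sum]
  rw [hg, Finset.sum_mul]
  refine Submodule.sum_mem _ fun t ht => ?_
  rw [smul_x_pow, smul_mul_assoc]
  refine Submodule.smul_mem _ _ ?_
  have hx : ASx F q f ^ t * (ASx F q f ^ i * ASy F q f ^ j)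
      = ASx F q f ^ (t + i) * ASy F q f ^ j := by
    rw [pow_add]; ring
  rw [hx]
  refine pow_mem_L F q f m hj ?_
  have ht' : t ≤ g.natDegree := by
    simpa using Nat.lt_succ_iff.mp (Finset.mem_range.mp ht)
  have : q * (t + i) ≤ q * (g.natDegree + i) :=
    Nat.mul_le_mul_left _ (by omega)
  omega

lemma y_pow_q (q : ℕ) (f : F[X]) :
    ASy F q f ^ q = AdjoinRoot.of _ f - ASy F q f := by
  have h := AdjoinRoot.mk_self (f := (X : (F[X])[X]) ^ q + X - C f)
  rw [map_sub, map_add, map_pow, AdjoinRoot.mk_X, AdjoinRoot.mk_C] at h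
  have : ASy F q f ^ q + ASy F q f - AdjoinRoot.of _ f = 0 := h
  rw [sub_eq_zero] at this
  rw [eq_sub_iff_add_eq]
  exact this

end Aux

theorem stmt_6 (p k q : ℕ) (hp : p.Prime) (hk : 1 ≤ k) (hq : q = p ^ k)
    (F : Type*) [Field F] [CharP F p]
    (f : F[X]) (m : ℕ) (hm : m = f.natDegree) (hm2 : 2 ≤ m) (hmp : Nat.Coprime m p) (hdvd : m ∣ q - 1) (s : ℕ) (hs : m ≤ s) :
    Lspace F q f m q * Lspace F q f m (s * q) = Lspace F q f m ((s + 1) * q) := by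
  have hq2 : 2 ≤ q := by
    rw [hq]; exact Nat.one_lt_pow (by omega) hp.one_lt
  apply le_antisymm
  · -- L(q) * L(sq) ≤ L((s+1)q)
    rw [Lspace, Lspace, Submodule.span_mul_span]
    rw [Submodule.span_le]
    rintro z hz
    rw [Set.mem_mul] at hz
    obtain ⟨a, ⟨i, j, hj, hwa, rfl⟩, b, ⟨i', j', hj', hwb, rfl⟩, rfl⟩ := hz
    have hmul : ASx F q f ^ i * ASy F q f ^ j * (ASx F q f ^ i' * ASy F q f ^ j')
        = ASx F q f ^ (i + i') * ASy F q f ^ (j + j') := by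
      rw [pow_add, pow_add]; ring
    rw [hmul]
    by_cases hcase : j + j' ≤ q - 1
    · refine pow_mem_L F q f m hcase ?_
      have h1 : q * (i + i') = q * i + q * i' := by ring
      have h2 : m * (j + j') = m * j + m * j' := by ring
      have h3 : (s + 1) * q = s * q + q := by ring
      omega
    · -- reduction using y^q = f - y
      have hjq : q ≤ j + j' := by omega
      have hsplit : ASx F q f ^ (i + i') * ASy F q f ^ (j + j')
          = AdjoinRoot.of _ f * (ASx F q f ^ (i + i') * ASy F q f ^ (j + j' - q))
            - ASx F q f ^ (i + i') * ASy F q f ^ (j + j' - q + 1) := by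
      -- y^(j+j') = y^(j+j'-q) * y^q
        have : ASy F q f ^ (j + j') = ASy F q f ^ (j + j' - q) * ASy F q f ^ q := by
          rw [← pow_add]
          congr 1
          omega
        rw [this, y_pow_q, pow_succ]
        ring
      rw [hsplit]
      have key : q * (i + i') + m * (j + j') ≤ (s + 1) * q := by
        have h1 : q * (i + i') = q * i + q * i' := by ring
        have h2 : m * (j + j') = m * j + m * j' := by ring
        have h3 : (s + 1) * q = s * q + q := by ring
        omega
      refine sub_mem ?_ ?_
      · refine poly_mul_mem F q f m (by omega) ?_
        -- q * (m + (i+i')) + m * (j+j'-q) ≤ (s+1)*q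
        rw [← hm]
        have e1 : m * (j + j' - q) = m * (j + j') - m * q := by
          rw [Nat.mul_sub]
        have e2 : q * (m + (i + i')) = m * q + q * i + q * i' := by ring
        have e3 : (s + 1) * q = s * q + q := by ring
        have e4 : m * q ≤ m * (j + j') := Nat.mul_le_mul_left _ hjq
        have e5 : m * (j + j') = m * j + m * j' := by ring
        omega
      · refine pow_mem_L F q f m (by omega) ?_
        have e1 : m * (j + j' - q + 1) = m * (j + j') - m * q + m := by
          rw [Nat.mul_add, Nat.mul_sub, mul_one]
        have e4 : m * q ≤ m * (j + j') := Nat.mul_le_mul_left _ hjq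
        have e5 : m ≤ m * q := Nat.le_mul_of_pos_right _ (by omega)
        have e6 : m * (j + j') = m * j + m * j' := by ring
        have e7 : q * (i + i') = q * i + q * i' := by ring
        have e8 : (s + 1) * q = s * q + q := by ring
        omega
  · -- L((s+1)q) ≤ L(q) * L(sq)
    rw [Lspace, Submodule.span_le]
    rintro z ⟨i, j, hj, hw, rfl⟩
    by_cases hcase : q * i + m * j ≤ s * q
    · have h1 : (1 : ASRing F q f) ∈ Lspace F q f m q := by
        simpa using pow_mem_L F q f m (i := 0) (j := 0) (by omega) (by simp)
      have h2 := pow_mem_L F q f m (i := i) (j := j) hj hcase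
      simpa using Submodule.mul_mem_mul h1 h2
    · have hi : 1 ≤ i := by
        by_contra hi0
        have hi0' : i = 0 := by omega
        subst hi0'
        have : m * j ≤ m * (q - 1) := Nat.mul_le_mul_left _ hj
        have h2 : m * (q - 1) ≤ s * (q - 1) := Nat.mul_le_mul_right _ hs
        have h3 : s * (q - 1) ≤ s * q := Nat.mul_le_mul_left _ (by omega)
        omega
      have h1 : ASx F q f ∈ Lspace F q f m q := by
        simpa using pow_mem_L F q f m (i := 1) (j := 0) (by omega) (by simp)
      have h2 : ASx F q f ^ (i - 1) * ASy F q f ^ j ∈ Lspace F q f m (s * q) := by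
        refine pow_mem_L F q f m hj ?_
        have e1 : q * (i - 1) = q * i - q := by rw [Nat.mul_sub]; omega
        have e2 : q * 1 ≤ q * i := Nat.mul_le_mul_left _ hi
        have e3 : (s + 1) * q = s * q + q := by ring
        omega
      have := Submodule.mul_mem_mul h1 h2
      have hx : ASx F q f * (ASx F q f ^ (i - 1) * ASy F q f ^ j)
          = ASx F q f ^ i * ASy F q f ^ j := by
        rw [← mul_assoc, ← pow_succ']
        congr 2
        omega
      rwa [hx] at this
end
end

section
/- Assume m divides q−1. Then for every integer s ≥ 1 one has L(q)·L(sq) = L((s+1)q); consequently, for every integer t ≥ 1 the t-fold product of L(q) with itself equals L(tq). (This says that the curve X_f, the image of C_f under the embedding defined by the complete linear system L(qQ∞) into projective space of dimension (q−1)/m + 1, is projectively normal.) -/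
open Polynomial

noncomputable section

lemma smul_eq' (F : Type*) [Field F] (q : ℕ) (f : F[X]) (c : F) (v : ASRing F q f) :
    AdjoinRoot.of _ (C c) * v = c • v := by
  rw [Algebra.smul_def, IsScalarTower.algebraMap_apply F F[X] (ASRing F q f),
    AdjoinRoot.algebraMap_eq, Polynomial.algebraMap_eq]

lemma ofsum (F : Type*) [Field F] (q : ℕ) (f : F[X]) (m : ℕ) (g : F[X]) (hm : g.natDegree ≤ m) :
    (AdjoinRoot.of ((X : (F[X])[X]) ^ q + X - C f)) g
      = ∑ t ∈ Finset.range (m+1), g.coeff t • (ASx F q f)^t := by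
  conv_lhs => rw [g.as_sum_range' (m+1) (by omega)]
  rw [map_sum]
  refine Finset.sum_congr rfl fun t _ => ?_
  rw [← C_mul_X_pow_eq_monomial, map_mul, map_pow, smul_eq']
  rfl

lemma rel (F : Type*) [Field F] (q : ℕ) (f : F[X]) :
    (ASy F q f)^q + ASy F q f = AdjoinRoot.of _ f := by
  have h := AdjoinRoot.mk_self (f := (X : (F[X])[X])^q + X - C f)
  rw [map_sub, map_add, map_pow, AdjoinRoot.mk_X, sub_eq_zero] at h
  exact h

lemma mono_mem (F : Type*) [Field F] (q : ℕ) (f : F[X]) (m : ℕ)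
    (hq2 : 2 ≤ q) (hfm : f.natDegree ≤ m) :
    ∀ j i N : ℕ, q * i + m * j ≤ N →
      ASx F q f ^ i * ASy F q f ^ j ∈ Lspace F q f m N := by
  intro j
  induction j using Nat.strong_induction_on with
  | _ j IH =>
    intro i N hN
    by_cases hj : j ≤ q - 1
    · exact Submodule.subset_span ⟨i, j, hj, hN, rfl⟩
    · have hjq : q ≤ j := by omega
      have hrel : (ASy F q f)^q = AdjoinRoot.of _ f - ASy F q f :=
        eq_sub_iff_add_eq.mpr (rel F q f)
      have step : ASx F q f ^ i * ASy F q f ^ j =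
          (AdjoinRoot.of _ f) * (ASx F q f ^ i * ASy F q f ^ (j-q))
            - ASx F q f ^ i * ASy F q f ^ (j-q+1) := by
        conv_lhs => rw [show j = (j-q)+q from by omega]
        rw [pow_add, hrel]
        ring
      have key : ASx F q f ^ i * ASy F q f ^ j =
          (∑ t ∈ Finset.range (m+1),
            f.coeff t • (ASx F q f ^ (i+t) * ASy F q f ^ (j-q)))
          - ASx F q f ^ i * ASy F q f ^ (j-q+1) := by
        rw [step, ofsum F q f m f hfm, Finset.sum_mul]
        congr 1
        refine Finset.sum_congr rfl fun t _ => ?_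
        rw [smul_mul_assoc]
        congr 1
        rw [pow_add]
        ring
      rw [key]
      refine Submodule.sub_mem _ (Submodule.sum_mem _ fun t ht => ?_) ?_
      · refine Submodule.smul_mem _ _ (IH (j-q) (by omega) (i+t) N ?_)
        have ht' : t ≤ m := by simpa using Nat.lt_succ_iff.mp (Finset.mem_range.mp ht)
        have e1 : q * (i+t) = q*i + q*t := Nat.mul_add q i t
        have e2 : m * (j-q) + m * q = m * j := by
          rw [← Nat.mul_add]; congr 1; omega
        have h1 : q * t ≤ q * m := Nat.mul_le_mul_left q ht'
        have h2 : q * m = m * q := Nat.mul_comm q m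
        omega
      · refine IH (j-q+1) (by omega) i N ?_
        have h1 : m * (j-q+1) ≤ m * j := Nat.mul_le_mul_left m (by omega)
        omega

theorem stmt_7 (p k q : ℕ) (hp : p.Prime) (hk : 1 ≤ k) (hq : q = p ^ k)
    (F : Type*) [Field F] [CharP F p]
    (f : F[X]) (m : ℕ) (hm : m = f.natDegree) (hm2 : 2 ≤ m) (hmp : Nat.Coprime m p) (hdvd : m ∣ q - 1) :
    (∀ s : ℕ, 1 ≤ s →
      Lspace F q f m q * Lspace F q f m (s * q) = Lspace F q f m ((s + 1) * q)) ∧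
    (∀ t : ℕ, 1 ≤ t → (Lspace F q f m q) ^ t = Lspace F q f m (t * q)) := by
  have hq2 : 2 ≤ q := by
    have h1 : p ≤ p ^ k := Nat.le_self_pow (by omega) p
    have := hp.two_le
    omega
  have hfm : f.natDegree ≤ m := le_of_eq hm.symm
  obtain ⟨d, hdq⟩ := hdvd
  have hmd : m * d = q - 1 := hdq.symm
  have hcop : Nat.Coprime m q := by rw [hq]; exact hmp.pow_right k
  have main : ∀ s : ℕ, 1 ≤ s →
      Lspace F q f m q * Lspace F q f m (s * q) = Lspace F q f m ((s + 1) * q) := by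
    intro s hs
    apply le_antisymm
    · rw [Lspace, Lspace, Submodule.span_mul_span]
      refine Submodule.span_le.mpr ?_
      rintro r ⟨a, ⟨i1, j1, hj1, hw1, rfl⟩, b, ⟨i2, j2, hj2, hw2, rfl⟩, rfl⟩
      beta_reduce
      have : (ASx F q f ^ i1 * ASy F q f ^ j1) * (ASx F q f ^ i2 * ASy F q f ^ j2)
          = ASx F q f ^ (i1+i2) * ASy F q f ^ (j1+j2) := by
        rw [pow_add, pow_add]; ring
      rw [this]
      refine mono_mem F q f m hq2 hfm (j1+j2) (i1+i2) _ ?_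
      have e1 : q*(i1+i2) = q*i1 + q*i2 := Nat.mul_add q i1 i2
      have e2 : m*(j1+j2) = m*j1 + m*j2 := Nat.mul_add m j1 j2
      have e3 : (s+1)*q = s*q + q := by ring
      omega
    · refine Submodule.span_le.mpr ?_
      rintro r ⟨i, j, hj, hw, rfl⟩
      rcases Nat.eq_zero_or_pos i with hi | hi
      · subst hi
        by_cases hjd : j ≤ d
        · have g1 : ASy F q f ^ j ∈ Lspace F q f m q := by
            refine Submodule.subset_span ⟨0, j, by omega, ?_, by rw [pow_zero, one_mul]⟩
            have : m * j ≤ m * d := Nat.mul_le_mul_left m hjd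
            omega
          have g2 : (1 : ASRing F q f) ∈ Lspace F q f m (s*q) :=
            Submodule.subset_span ⟨0, 0, by omega, by omega, by simp⟩
          have := Submodule.mul_mem_mul g1 g2
          simpa using this
        · -- j > d : split y^j = y^d * y^(j-d)
          have hmjlt : m * j < (s+1) * q := by
            rcases lt_or_eq_of_le hw with h | h
            · simpa using h
            · exfalso
              have hmdvd : m ∣ (s+1) * q := ⟨j, by omega⟩
              have hms : m ∣ (s+1) := (Nat.Coprime.dvd_of_dvd_mul_right hcop) hmdvd
              have hms' : m ≤ s+1 := Nat.le_of_dvd (by omega) hms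
              have : m * j ≥ m * q := by
                calc m * q ≤ (s+1) * q := Nat.mul_le_mul_right q hms'
                _ = 0 + m * j := by omega
                _ = m * j := by omega
              have : q ≤ j := Nat.le_of_mul_le_mul_left this (by omega)
              omega
          have g1 : ASy F q f ^ d ∈ Lspace F q f m q := by
            refine Submodule.subset_span ⟨0, d, ?_, by omega, by rw [pow_zero, one_mul]⟩
            have : d ≤ q - 1 := by
              calc d ≤ m * d := Nat.le_mul_of_pos_left d (by omega)
              _ = q - 1 := hmd
            omega
          have g2 : ASy F q f ^ (j - d) ∈ Lspace F q f m (s*q) := by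
            refine Submodule.subset_span ⟨0, j - d, by omega, ?_, by rw [pow_zero, one_mul]⟩
            have e2 : m * (j-d) + m * d = m * j := by
              rw [← Nat.mul_add]; congr 1; omega
            have e3 : (s+1)*q = s*q + q := by ring
            omega
          have := Submodule.mul_mem_mul g1 g2
          have e : ASy F q f ^ d * ASy F q f ^ (j-d) = ASx F q f ^ 0 * ASy F q f ^ j := by
            rw [pow_zero, one_mul, ← pow_add]
            congr 1; omega
          rwa [e] at this
      · -- i ≥ 1: split off x
        have g1 : ASx F q f ∈ Lspace F q f m q :=
          Submodule.subset_span ⟨1, 0, by omega, by omega, by simp⟩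
        have g2 : ASx F q f ^ (i-1) * ASy F q f ^ j ∈ Lspace F q f m (s*q) := by
          refine Submodule.subset_span ⟨i-1, j, hj, ?_, rfl⟩
          have e1 : q * (i-1) + q = q * i := by
            rw [show q * (i-1) + q = q * (i-1+1) from by ring]; congr 1; omega
          have e3 : (s+1)*q = s*q + q := by ring
          omega
        have := Submodule.mul_mem_mul g1 g2
        have e : ASx F q f * (ASx F q f ^ (i-1) * ASy F q f ^ j)
            = ASx F q f ^ i * ASy F q f ^ j := by
          rw [← mul_assoc, ← pow_succ']
          congr 2; omega
        rwa [e] at this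
  refine ⟨main, ?_⟩
  intro t ht
  induction t with
  | zero => omega
  | succ n IHn =>
    rcases Nat.eq_zero_or_pos n with h0 | h1
    · subst h0; norm_num
    · rw [pow_succ, IHn h1, mul_comm, main n h1]
end
end

section
/- Assume m ≥ 3 and m divides q−1, and set c := (q−1)/m. Let z_0, z_1, …, z_{c+1} be variables and let ev : F[z_0, …, z_{c+1}] → R be the F-algebra homomorphism with ev(z_0) = 1, ev(z_1) = x, and ev(z_{1+u}) = y^u for 1 ≤ u ≤ c (the images forming the basis of L(q)). Then ev maps the F-space of homogeneous polynomials of degree 2 in z_0, …, z_{c+1} onto L(2q), and the kernel of this restricted linear map has F-dimension binom(c+3, 2) − 3c − 3. (Geometrically: X_f ⊆ P^{c+1} is contained in exactly binom(c+3,2) − 3c − 3 linearly independent quadric hypersurfaces.) -/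
open Polynomial

noncomputable section

/-! With `q = m c + 1`, the coordinates `1, x, y, …, y^c` are exactly the monomials `x^i y^j`
with `c i + j ≤ c`, so their pairwise products are exactly the monomials with `c i + j ≤ 2c`:
`1, …, y^(2c), x, …, x y^c, x^2`. For `j ≤ q - 1` the inequality `q i + m j ≤ 2q` singles out
the same `3c + 3` monomials, so quadrics map onto `L(2q)`. These monomials have `y`-degree
`< q`, hence belong to the `F`-basis `x^i y^j` (`j < q`) of `R` coming from the power basis of
`R` over `F[x]`; so `dim L(2q) = 3c + 3`, and rank–nullity on the `binom(c+3, 2)`-dimensional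
space of quadrics gives the kernel. -/

namespace MvPolynomial

open scoped Pointwise in
theorem map_aeval_homogeneousSubmodule {ι R A : Type*} [CommSemiring R] [CommSemiring A]
    [Algebra R A] (v : ι → A) (n : ℕ) :
    (homogeneousSubmodule ι R n).map (aeval v).toLinearMap =
      Submodule.span R (Set.range v ^ n) := by
  rw [← homogeneousSubmodule_one_pow, Submodule.map_pow, homogeneousSubmodule_one_eq_span_X,
    Submodule.map_span, ← Set.range_comp, Submodule.span_pow]
  congr
  ext
  simp

theorem finrank_homogeneousSubmodule (σ K : Type*) [Fintype σ] [Field K] (n : ℕ) :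
    Module.finrank K (homogeneousSubmodule σ K n) = (Fintype.card σ + n - 1).choose n := by
  classical
  have hS : {d : σ →₀ ℕ | d.degree = n} =
      ((Finset.univ : Finset σ).finsuppAntidiag n : Set (σ →₀ ℕ)) := by
    ext d
    simp [Finset.mem_finsuppAntidiag, Finsupp.degree_eq_sum]
  rw [((LinearEquiv.ofEq _ _ (homogeneousSubmodule_eq_finsupp_supported σ K n)).trans
    (AddMonoidAlgebra.supportedEquivFinsupp _)).finrank_eq, hS, Module.finrank_finsupp_self]
  simp [Finset.card_finsuppAntidiag_nat_eq_choose]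

end MvPolynomial

namespace Polynomial

variable {R : Type*} [Ring R] (a : R) {n : ℕ}

lemma degree_X_sub_C_lt (hn : 1 < n) : ((X : R[X]) - C a).degree < n :=
  (degree_sub_le _ _).trans_lt (max_lt (degree_X_le.trans_lt (by exact_mod_cast hn))
    (degree_C_le.trans_lt (by exact_mod_cast (by omega : 0 < n))))

lemma monic_X_pow_add_X_sub_C (hn : 1 < n) : ((X : R[X]) ^ n + X - C a).Monic := by
  rw [add_sub_assoc]
  exact monic_X_pow_add (degree_X_sub_C_lt a hn)

lemma natDegree_X_pow_add_X_sub_C [Nontrivial R] (hn : 1 < n) :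
    ((X : R[X]) ^ n + X - C a).natDegree = n := by
  rw [add_sub_assoc, natDegree_add_eq_left_of_degree_lt
    (by rw [degree_X_pow]; exact degree_X_sub_C_lt a hn), natDegree_X_pow]

end Polynomial

def coordExponent : ℕ → ℕ × ℕ
  | 0 => (0, 0)
  | 1 => (1, 0)
  | u + 2 => (0, u + 1)

lemma range_coordExponent {c : ℕ} (hc : 1 ≤ c) :
    Set.range (fun a : Fin (c + 2) => coordExponent a) = {t | c * t.1 + t.2 ≤ c} := by
  ext t
  constructor
  · rintro ⟨⟨a, ha⟩, rfl⟩
    rcases a with _ | _ | u <;> simp only [coordExponent, Set.mem_ofPred_eq] <;> omega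
  · obtain ⟨i, j⟩ := t
    intro h
    simp only [Set.mem_ofPred_eq] at h
    obtain rfl | rfl : i = 0 ∨ i = 1 := by
      rcases Nat.lt_or_ge i 2 with hi | hi
      · omega
      · nlinarith
    · rcases j with _ | j
      · exact ⟨⟨0, by omega⟩, rfl⟩
      · exact ⟨⟨j + 2, by omega⟩, rfl⟩
    · obtain rfl : j = 0 := by omega
      exact ⟨⟨1, by omega⟩, rfl⟩

open scoped Pointwise in
lemma setOf_weight_le_add_self {c : ℕ} (hc : 1 ≤ c) :
    {t : ℕ × ℕ | c * t.1 + t.2 ≤ c} + {t | c * t.1 + t.2 ≤ c} =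
      {t | c * t.1 + t.2 ≤ 2 * c} := by
  ext ⟨i, j⟩
  simp only [Set.mem_add, Set.mem_ofPred_eq, Prod.exists, Prod.mk_add_mk, Prod.mk.injEq]
  constructor
  · rintro ⟨i₁, j₁, h₁, i₂, j₂, h₂, rfl, rfl⟩
    linarith
  · intro h
    have hi : i ≤ 2 := by nlinarith
    interval_cases i
    · exact ⟨0, min j c, by omega, 0, j - min j c, by omega, rfl, by omega⟩
    · exact ⟨1, 0, by omega, 0, j, by omega, rfl, by omega⟩
    · exact ⟨1, 0, by omega, 1, 0, by omega, rfl, by omega⟩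

lemma setOf_Lspace_exponents_two_mul {q m c : ℕ} (hm : 2 ≤ m) (hc : 1 ≤ c)
    (hq : q = m * c + 1) :
    {t : ℕ × ℕ | t.2 ≤ q - 1 ∧ q * t.1 + m * t.2 ≤ 2 * q} = {t | c * t.1 + t.2 ≤ 2 * c} := by
  ext ⟨i, j⟩
  simp only [Set.mem_ofPred_eq]
  subst hq
  rw [Nat.add_sub_cancel]
  constructor
  · rintro ⟨hj, h⟩
    have hi : i ≤ 2 := by nlinarith
    interval_cases i <;> nlinarith
  · intro h
    have hi : i ≤ 2 := by nlinarith
    interval_cases i <;> constructor <;> nlinarith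

def quadricExponents (c : ℕ) : Finset (ℕ × ℕ) :=
  {0} ×ˢ Finset.range (2 * c + 1) ∪ {1} ×ˢ Finset.range (c + 1) ∪ {(2, 0)}

lemma coe_quadricExponents {c : ℕ} (hc : 1 ≤ c) :
    (quadricExponents c : Set (ℕ × ℕ)) = {t | c * t.1 + t.2 ≤ 2 * c} := by
  ext ⟨i, j⟩
  simp only [quadricExponents, Finset.coe_union, Finset.coe_product, Finset.coe_singleton,
    Finset.coe_range, Set.mem_union, Set.mem_prod, Set.mem_singleton_iff, Set.mem_Iio,
    Prod.mk.injEq, Set.mem_ofPred_eq]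
  constructor
  · rintro ((⟨rfl, hj⟩ | ⟨rfl, hj⟩) | ⟨rfl, rfl⟩) <;> omega
  · intro h
    have hi : i ≤ 2 := by nlinarith
    interval_cases i <;> omega

lemma card_quadricExponents (c : ℕ) : (quadricExponents c).card = 3 * c + 3 := by
  rw [quadricExponents, Finset.card_union_of_disjoint, Finset.card_union_of_disjoint]
  · simp only [Finset.card_product, Finset.card_singleton, Finset.card_range]
    omega
  all_goals
    simp only [Finset.disjoint_left, Finset.mem_product, Finset.mem_union, Finset.mem_singleton]
    grind

lemma snd_le_of_mem_quadricExponents {c : ℕ} {t : ℕ × ℕ} (ht : t ∈ quadricExponents c) :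
    t.2 ≤ 2 * c := by
  obtain ⟨i, j⟩ := t
  simp only [quadricExponents, Finset.mem_union, Finset.mem_product, Finset.mem_singleton,
    Finset.mem_range, Prod.mk.injEq] at ht
  omega

section ArtinSchreier

variable (F : Type*) [Field F] (q : ℕ) (f : F[X])

def asMonomial (t : ℕ × ℕ) : ASRing F q f := ASx F q f ^ t.1 * ASy F q f ^ t.2

lemma asMonomial_add (s t : ℕ × ℕ) :
    asMonomial F q f (s + t) = asMonomial F q f s * asMonomial F q f t := by
  simp only [asMonomial, Prod.fst_add, Prod.snd_add, pow_add]
  ring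

open scoped Pointwise in
lemma image_asMonomial_mul (S T : Set (ℕ × ℕ)) :
    asMonomial F q f '' S * asMonomial F q f '' T = asMonomial F q f '' (S + T) := by
  simp only [← Set.image2_mul, ← Set.image2_add, Set.image2_image_left, Set.image2_image_right,
    Set.image_image2, asMonomial_add]

lemma Lspace_eq_span_image_asMonomial (m s : ℕ) :
    Lspace F q f m s =
      Submodule.span F (asMonomial F q f '' {t | t.2 ≤ q - 1 ∧ q * t.1 + m * t.2 ≤ s}) := by
  rw [Lspace]
  congr 1
  ext r
  simp only [Set.mem_ofPred_eq, Set.mem_image, Prod.exists, asMonomial, eq_comm (b := r)]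
  grind

variable {q}

def asMonomialBasis (hq : 1 < q) : Module.Basis (ℕ × Fin q) F (ASRing F q f) :=
  ((basisMonomials F).smulTower
      (AdjoinRoot.powerBasis' (monic_X_pow_add_X_sub_C f hq)).basis).reindex
    ((Equiv.refl ℕ).prodCongr (finCongr (natDegree_X_pow_add_X_sub_C f hq)))

lemma asMonomialBasis_apply (hq : 1 < q) (i : ℕ) (j : Fin q) :
    asMonomialBasis F f hq (i, j) = asMonomial F q f (i, j) := by
  simp only [asMonomialBasis, Module.Basis.coe_reindex, Equiv.prodCongr_symm, Equiv.refl_symm,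
    Equiv.prodCongr_apply, Equiv.coe_refl, Function.comp_apply, Prod.map_apply, id_eq,
    Module.Basis.smulTower_apply, coe_basisMonomials, ← X_pow_eq_monomial, PowerBasis.coe_basis,
    AdjoinRoot.powerBasis'_gen, Algebra.smul_def, AdjoinRoot.algebraMap_eq, map_pow, asMonomial,
    ASx, ASy]
  rfl

lemma linearIndepOn_asMonomial (hq : 1 < q) :
    LinearIndepOn F (asMonomial F q f) {t | t.2 < q} := by
  have hinj : Function.Injective
      fun t : {t : ℕ × ℕ | t.2 < q} => (t.1.1, (⟨t.1.2, t.2⟩ : Fin q)) :=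
    fun s t hst => by grind
  unfold LinearIndepOn
  convert (asMonomialBasis F f hq).linearIndependent.comp _ hinj using 1
  funext t
  simp [asMonomialBasis_apply]

lemma finrank_span_image_asMonomial (hq : 1 < q) (T : Finset (ℕ × ℕ))
    (hT : ∀ t ∈ T, t.2 < q) :
    Module.finrank F (Submodule.span F (asMonomial F q f '' T)) = T.card := by
  rw [Set.image_eq_range, finrank_span_eq_card ((linearIndepOn_asMonomial F f hq).mono hT)]
  simp

variable {F f} {c : ℕ} {v : Fin (c + 2) → ASRing F q f}

lemma eq_asMonomial_coordExponent (hv0 : v 0 = 1) (hv1 : v 1 = ASx F q f)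
    (hvu : ∀ u : ℕ, 1 ≤ u → u ≤ c → v (Fin.ofNat (c + 2) (1 + u)) = ASy F q f ^ u)
    (a : Fin (c + 2)) : v a = asMonomial F q f (coordExponent a) := by
  obtain ⟨_ | _ | u, ha⟩ := a
  · simpa [asMonomial, coordExponent] using hv0
  · simpa [asMonomial, coordExponent] using hv1
  · have ha' : Fin.ofNat (c + 2) (1 + (u + 1)) = ⟨u + 2, ha⟩ := by
      ext
      rw [Fin.val_ofNat, Nat.mod_eq_of_lt (by omega), Fin.val_mk]
      omega
    rw [← ha', hvu (u + 1) (by omega) (by omega), ha']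
    simp [asMonomial, coordExponent]

open scoped Pointwise in
lemma map_aeval_homogeneousSubmodule_two_eq_span (hc : 1 ≤ c) (hv0 : v 0 = 1)
    (hv1 : v 1 = ASx F q f)
    (hvu : ∀ u : ℕ, 1 ≤ u → u ≤ c → v (Fin.ofNat (c + 2) (1 + u)) = ASy F q f ^ u) :
    (MvPolynomial.homogeneousSubmodule (Fin (c + 2)) F 2).map
        (MvPolynomial.aeval v).toLinearMap =
      Submodule.span F (asMonomial F q f '' quadricExponents c) := by
  have hv : v = asMonomial F q f ∘ fun a : Fin (c + 2) => coordExponent a :=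
    funext (eq_asMonomial_coordExponent hv0 hv1 hvu)
  rw [MvPolynomial.map_aeval_homogeneousSubmodule, hv, Set.range_comp, pow_two,
    image_asMonomial_mul, range_coordExponent hc, setOf_weight_le_add_self hc,
    coe_quadricExponents hc]

end ArtinSchreier

theorem stmt_9_general (p k q : ℕ) (hp : p.Prime) (hk : 1 ≤ k) (hq : q = p ^ k)
    (F : Type*) [Field F]
    (f : F[X]) (m : ℕ) (hm2 : 2 ≤ m) (hdvd : m ∣ q - 1)
    (c : ℕ) (hc : c = (q - 1) / m)
    (v : Fin (c + 2) → ASRing F q f)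
    (hv0 : v 0 = 1) (hv1 : v 1 = ASx F q f)
    (hvu : ∀ u : ℕ, 1 ≤ u → u ≤ c → v (Fin.ofNat (c + 2) (1 + u)) = ASy F q f ^ u) :
    Submodule.map (MvPolynomial.aeval v).toLinearMap
        (MvPolynomial.homogeneousSubmodule (Fin (c + 2)) F 2) =
      Lspace F q f m (2 * q) ∧
    Module.finrank F
        (LinearMap.ker ((MvPolynomial.aeval (R := F) v).toLinearMap.domRestrict
          (MvPolynomial.homogeneousSubmodule (Fin (c + 2)) F 2))) =
      Nat.choose (c + 3) 2 - (3 * c + 3) := by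
  have hq1 : 1 < q := hq ▸ hp.one_lt.trans_le (Nat.le_self_pow (by omega) p)
  have hqc : q = m * c + 1 := by rw [hc, Nat.mul_div_cancel' hdvd]; omega
  have hc1 : 1 ≤ c := Nat.pos_of_ne_zero fun h => by simp [h] at hqc; omega
  have h2c : 2 * c < q := by nlinarith
  have himage := map_aeval_homogeneousSubmodule_two_eq_span hc1 hv0 hv1 hvu
  refine ⟨by rw [himage, Lspace_eq_span_image_asMonomial,
    setOf_Lspace_exponents_two_mul hm2 hc1 hqc, coe_quadricExponents hc1], ?_⟩
  have : FiniteDimensional F (MvPolynomial.homogeneousSubmodule (Fin (c + 2)) F 2) :=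
    Module.Finite.iff_fg.2 (MvPolynomial.homogeneousSubmodule_fg _ _ 2)
  have hrank := LinearMap.finrank_range_add_finrank_ker
    ((MvPolynomial.aeval (R := F) v).toLinearMap.domRestrict
      (MvPolynomial.homogeneousSubmodule (Fin (c + 2)) F 2))
  rw [LinearMap.range_domRestrict, himage, finrank_span_image_asMonomial F f hq1 _
      fun t ht => (snd_le_of_mem_quadricExponents ht).trans_lt h2c,
    card_quadricExponents, MvPolynomial.finrank_homogeneousSubmodule, Fintype.card_fin,
    (by omega : c + 2 + 2 - 1 = c + 3)] at hrank
  omega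

theorem stmt_9 (p k q : ℕ) (hp : p.Prime) (hk : 1 ≤ k) (hq : q = p ^ k)
    (F : Type*) [Field F] [CharP F p]
    (f : F[X]) (m : ℕ) (hm : m = f.natDegree) (hm2 : 2 ≤ m) (hmp : Nat.Coprime m p) (hm3 : 3 ≤ m) (hdvd : m ∣ q - 1)
    (c : ℕ) (hc : c = (q - 1) / m)
    (v : Fin (c + 2) → ASRing F q f)
    (hv0 : v 0 = 1) (hv1 : v 1 = ASx F q f)
    (hvu : ∀ u : ℕ, 1 ≤ u → u ≤ c → v (Fin.ofNat (c + 2) (1 + u)) = ASy F q f ^ u) :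
    Submodule.map (MvPolynomial.aeval v).toLinearMap
        (MvPolynomial.homogeneousSubmodule (Fin (c + 2)) F 2) =
      Lspace F q f m (2 * q) ∧
    Module.finrank F
        (LinearMap.ker ((MvPolynomial.aeval (R := F) v).toLinearMap.domRestrict
          (MvPolynomial.homogeneousSubmodule (Fin (c + 2)) F 2))) =
      Nat.choose (c + 3) 2 - (3 * c + 3) :=
  stmt_9_general p k q hp hk hq F f m hm2 hdvd c hc v hv0 hv1 hvu
end
end

section
/- Let t ≥ 1 be an integer and assume m divides tq+1. If s is an integer with s ≥ m, then L(tq+1)·L(s(tq+1)) = L((s+1)(tq+1)); that is, the multiplication map L(tq+1) ⊗ L(s(tq+1)) → L((s+1)(tq+1)) is surjective. -/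
open Polynomial

noncomputable section

/-- The map `F[X] → R`. -/
def ASof (F : Type*) [Field F] (q : ℕ) (f : F[X]) : F[X] →+* ASRing F q f :=
  AdjoinRoot.of _

section Aux

variable (F : Type*) [Field F] (q : ℕ) (f : F[X])

lemma AS_rel : ASy F q f ^ q = ASof F q f f - ASy F q f := by
  have h := AdjoinRoot.eval₂_root ((X : (F[X])[X]) ^ q + X - C f)
  simp only [eval₂_add, eval₂_sub, eval₂_pow, eval₂_X, eval₂_C] at h
  simp only [ASy, ASof]
  linear_combination h

lemma AS_smul (c : F) (w : ASRing F q f) : ASof F q f (C c) * w = c • w := by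
  rw [Algebra.smul_def]; rfl

lemma AS_of_mul_monomial (g : F[X]) (i j : ℕ) :
    ASof F q f g * (ASx F q f ^ i * ASy F q f ^ j) =
      ∑ e ∈ g.support, g.coeff e • (ASx F q f ^ (i + e) * ASy F q f ^ j) := by
  conv_lhs => rw [g.as_sum_support]
  rw [map_sum, Finset.sum_mul]
  refine Finset.sum_congr rfl ?_
  intro e _
  rw [← C_mul_X_pow_eq_monomial, map_mul, map_pow]
  have hx : ASof F q f X = ASx F q f := rfl
  rw [hx, mul_assoc, AS_smul]
  congr 1
  rw [pow_add]; ring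

variable (m : ℕ)

lemma mem_basic (i j s' : ℕ) (hj : j ≤ q - 1) (h : q * i + m * j ≤ s') :
    ASx F q f ^ i * ASy F q f ^ j ∈ Lspace F q f m s' :=
  Submodule.subset_span ⟨i, j, hj, h, rfl⟩

lemma mem_L (hq2 : 2 ≤ q) (hmf : m = f.natDegree) (i J s' : ℕ)
    (hJ : J ≤ 2 * q - 2) (hw : q * i + m * J ≤ s') :
    ASx F q f ^ i * ASy F q f ^ J ∈ Lspace F q f m s' := by
  by_cases hJq : J ≤ q - 1
  · exact mem_basic F q f m i J s' hJq hw
  · obtain ⟨j', rfl⟩ : ∃ j', J = j' + q := ⟨J - q, by omega⟩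
    have exp2 : m * (j' + q) = m * j' + m * q := by ring
    have hA : ASof F q f f * (ASx F q f ^ i * ASy F q f ^ j') ∈ Lspace F q f m s' := by
      rw [AS_of_mul_monomial]
      refine Submodule.sum_mem _ ?_
      intro e he
      refine Submodule.smul_mem _ _ ?_
      have hem : e ≤ m := by
        rw [hmf]; exact le_natDegree_of_ne_zero (mem_support_iff.mp he)
      have hqe : q * e ≤ q * m := Nat.mul_le_mul (le_refl q) hem
      have exp1 : q * (i + e) = q * i + q * e := by ring
      have hcm : m * q = q * m := by ring
      refine mem_basic F q f m (i + e) j' s' (by omega) (by linarith)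
    have hB : ASx F q f ^ i * ASy F q f ^ (j' + 1) ∈ Lspace F q f m s' := by
      have hmq : m * 1 ≤ m * q := Nat.mul_le_mul (le_refl m) (by omega)
      have exp3 : m * (j' + 1) = m * j' + m * 1 := by ring
      exact mem_basic F q f m i (j' + 1) s' (by omega) (by linarith)
    have hid : ASx F q f ^ i * ASy F q f ^ (j' + q) =
        ASof F q f f * (ASx F q f ^ i * ASy F q f ^ j') -
          ASx F q f ^ i * ASy F q f ^ (j' + 1) := by
      rw [pow_add _ j' q, AS_rel, pow_succ]; ring
    rw [hid]
    exact Submodule.sub_mem _ hA hB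

end Aux

/-- The combinatorial splitting lemma. -/
lemma comb_split (q m t s n i j : ℕ) (hq2 : 2 ≤ q) (hm2 : 2 ≤ m) (ht : 1 ≤ t)
    (hs : m ≤ s) (hn : t * q + 1 = m * n) (hj : j + 1 ≤ q)
    (hD : q * i + m * j ≤ (s + 1) * (t * q + 1))
    (hD2 : s * (t * q + 1) < q * i + m * j) :
    (∃ a b c d, i = a + c ∧ j = b + d ∧ q * a + m * b ≤ t * q + 1 ∧
      q * c + m * d ≤ s * (t * q + 1)) ∨
    (∃ a b c d, i = a + c + m ∧ j + q = b + d ∧ j + 1 ≤ b ∧ b + 1 ≤ q ∧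
      q * a + m * b ≤ t * q + 1 ∧ q * c + m * d ≤ s * (t * q + 1)) := by
  set N := t * q + 1 with hN
  have hqN : q ≤ N := by nlinarith
  have hmsN : m * N ≤ s * N := Nat.mul_le_mul hs (le_refl N)
  set B := n % q with hB
  set A := m * (n / q) with hA
  have hdm : q * (n / q) + n % q = n := Nat.div_add_mod n q
  have hab : q * A + m * B = N := by
    have : q * A + m * B = m * (q * (n / q) + n % q) := by rw [hA, hB]; ring
    rw [this, hdm, ← hn]
  have hBq : B < q := Nat.mod_lt _ (by omega)
  rcases le_or_gt B j with h1 | h1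
  · -- B ≤ j : case (A)
    rcases le_or_gt A i with h2 | h2
    · left
      refine ⟨A, B, i - A, j - B, by omega, by omega, by omega, ?_⟩
      have e1 : q * A + q * (i - A) = q * i := by
        rw [← Nat.mul_add]; congr 1; omega
      have e2 : m * B + m * (j - B) = m * j := by
        rw [← Nat.mul_add]; congr 1; omega
      linarith
    · left
      refine ⟨i, B, 0, j - B, by omega, by omega, ?_, ?_⟩
      · have : q * i ≤ q * A := Nat.mul_le_mul (le_refl q) (by omega)
        linarith
      · have hd1 : m * (j - B) ≤ m * q := Nat.mul_le_mul (le_refl m) (by omega)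
        have : m * q ≤ m * N := Nat.mul_le_mul (le_refl m) hqN
        linarith
  · -- B > j
    rcases le_or_gt m i with h2 | h2
    · right
      rcases le_or_gt A (i - m) with h3 | h3
      · refine ⟨A, B, i - m - A, j + q - B, by omega, by omega, by omega, by omega,
          by omega, ?_⟩
        have e1 : q * A + q * (i - m - A) + q * m = q * i := by
          rw [← Nat.mul_add, ← Nat.mul_add]; congr 1; omega
        have e2 : m * B + m * (j + q - B) = m * j + m * q := by
          rw [← Nat.mul_add, show m * j + m * q = m * (j + q) by ring]; congr 1; omega
        have hqm : q * m = m * q := by ring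
        linarith
      · refine ⟨i - m, B, 0, j + q - B, by omega, by omega, by omega, by omega, ?_, ?_⟩
        · have : q * (i - m) ≤ q * A := Nat.mul_le_mul (le_refl q) (by omega)
          linarith
        · have hd1 : m * (j + q - B) ≤ m * q := Nat.mul_le_mul (le_refl m) (by omega)
          have : m * q ≤ m * N := Nat.mul_le_mul (le_refl m) hqN
          linarith
    · -- i < m : contradiction
      exfalso
      rcases Nat.lt_or_ge t 2 with ht1 | ht2
      · have ht1' : t = 1 := by omega
        subst ht1'
        have hn1 : m * n = q + 1 := by omega
        have hnq : n < q := by nlinarith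
        have hBn : B = n := by rw [hB, Nat.mod_eq_of_lt hnq]
        have hjn : j + 1 ≤ n := by omega
        have hmj : m * (j + 1) ≤ m * n := Nat.mul_le_mul (le_refl m) hjn
        have hmj' : m * (j + 1) = m * j + m := by ring
        have hqi : q * (i + 1) ≤ q * m := Nat.mul_le_mul (le_refl q) (by omega)
        have hqi' : q * (i + 1) = q * i + q := by ring
        have hms : m * (q + 1) ≤ s * (q + 1) := Nat.mul_le_mul hs (le_refl _)
        have hms' : m * (q + 1) = m * q + m := by ring
        have hqm : q * m = m * q := by ring
        simp only [hN] at hD2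
        linarith
      · have hqi : q * (i + 1) ≤ q * m := Nat.mul_le_mul (le_refl q) (by omega)
        have hqi' : q * (i + 1) = q * i + q := by ring
        have hmj : m * (j + 1) ≤ m * q := Nat.mul_le_mul (le_refl m) (by omega)
        have hmj' : m * (j + 1) = m * j + m := by ring
        have h2q : m * (2 * q + 1) ≤ m * N := by
          refine Nat.mul_le_mul (le_refl m) ?_
          have : 2 * q ≤ t * q := Nat.mul_le_mul ht2 (le_refl q)
          omega
        have h2q' : m * (2 * q + 1) = 2 * (m * q) + m := by ring
        have hqm : q * m = m * q := by ring
        linarith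

section Key

variable (F : Type*) [Field F] (q : ℕ) (f : F[X]) (m t s n : ℕ)

lemma key_mem (hq2 : 2 ≤ q) (hm2 : 2 ≤ m) (ht : 1 ≤ t) (hs : m ≤ s)
    (hmf : m = f.natDegree) (hn : t * q + 1 = m * n) :
    ∀ D i j, j + 1 ≤ q → q * i + m * j = D → D ≤ (s + 1) * (t * q + 1) →
      ASx F q f ^ i * ASy F q f ^ j ∈
        Lspace F q f m (t * q + 1) * Lspace F q f m (s * (t * q + 1)) := by
  intro D
  induction D using Nat.strong_induction_on with
  | _ D ih =>
    intro i j hj hD hle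
    set N := t * q + 1 with hN
    set x := ASx F q f with hx
    set y := ASy F q f with hy
    by_cases hsmall : q * i + m * j ≤ s * N
    · have h1 : (1 : ASRing F q f) ∈ Lspace F q f m N := by
        have := mem_basic F q f m 0 0 N (by omega) (by omega)
        simpa using this
      have h2 : x ^ i * y ^ j ∈ Lspace F q f m (s * N) :=
        mem_basic F q f m i j _ (by omega) hsmall
      have := Submodule.mul_mem_mul h1 h2
      simpa using this
    · push_neg at hsmall
      rcases comb_split q m t s n i j hq2 hm2 ht hs hn hj (hD ▸ hle) hsmall with
        ⟨a, b, c, d, hiac, hjbd, hLa, hLb⟩ | ⟨a, b, c, d, hiac, hjbd, hb1, hbq, hLa, hLb⟩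
      · -- case (A): pure monomial splitting
        have hu : x ^ a * y ^ b ∈ Lspace F q f m N :=
          mem_basic F q f m a b _ (by omega) hLa
        have hv : x ^ c * y ^ d ∈ Lspace F q f m (s * N) :=
          mem_basic F q f m c d _ (by omega) hLb
        have := Submodule.mul_mem_mul hu hv
        have hident : x ^ i * y ^ j = (x ^ a * y ^ b) * (x ^ c * y ^ d) := by
          rw [hiac, hjbd, pow_add, pow_add]; ring
        rw [hident]
        exact this
      · -- case (B): use the curve relation
        have hu : x ^ a * y ^ b ∈ Lspace F q f m N :=
          mem_basic F q f m a b _ (by omega) hLa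
        have hv : x ^ c * y ^ d ∈ Lspace F q f m (s * N) :=
          mem_basic F q f m c d _ (by omega) hLb
        have huv := Submodule.mul_mem_mul hu hv
        have hbd : b + d = j + q := hjbd.symm
        have hid : (x ^ a * y ^ b) * (x ^ c * y ^ d) + x ^ (a + c) * y ^ (j + 1)
            = ASof F q f f * (x ^ (a + c) * y ^ j) := by
          have e0 : (x ^ a * y ^ b) * (x ^ c * y ^ d) = x ^ (a + c) * y ^ (b + d) := by
            rw [pow_add, pow_add]; ring
          rw [e0, hbd, pow_add _ j q, hy, AS_rel, ← hy, pow_succ]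
          ring
        -- decompose f
        have hf0 : f ≠ 0 := by
          intro h
          rw [h, natDegree_zero] at hmf; omega
        have hlc : f.leadingCoeff ≠ 0 := leadingCoeff_ne_zero.mpr hf0
        have hfsplit : f.eraseLead + C f.leadingCoeff * X ^ m = f := by
          rw [hmf]; exact f.eraseLead_add_C_mul_X_pow
        have hsplit : ASof F q f f * (x ^ (a + c) * y ^ j) =
            ASof F q f f.eraseLead * (x ^ (a + c) * y ^ j) +
              f.leadingCoeff • (x ^ i * y ^ j) := by
          have hof : ASof F q f f =
              ASof F q f (f.eraseLead + C f.leadingCoeff * X ^ m) :=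
            (congrArg (ASof F q f) hfsplit).symm
          rw [hof, map_add, map_mul, map_pow, add_mul]
          congr 1
          have hxo : ASof F q f X = x := rfl
          rw [hxo, mul_assoc, AS_smul]
          congr 1
          rw [hiac, pow_add, pow_add]; ring
        -- expansion of i via hiac
        have e1 : q * i = q * (a + c) + q * m := by rw [hiac]; ring
        have hDval : q * i + m * j = D := hD
        -- membership of the two correction terms, by induction
        have hB1 : x ^ (a + c) * y ^ (j + 1) ∈
            Lspace F q f m N * Lspace F q f m (s * N) := by
          have hqm2 : 2 * m ≤ q * m := Nat.mul_le_mul hq2 (le_refl m)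
          have e2 : m * (j + 1) = m * j + m := by ring
          have hlt : q * (a + c) + m * (j + 1) < D := by omega
          exact ih _ hlt (a + c) (j + 1) (by omega) rfl (by omega)
        have hB2 : ASof F q f f.eraseLead * (x ^ (a + c) * y ^ j) ∈
            Lspace F q f m N * Lspace F q f m (s * N) := by
          rw [hx, hy, AS_of_mul_monomial]
          refine Submodule.sum_mem _ ?_
          intro e he
          refine Submodule.smul_mem _ _ ?_
          have he' : e ∈ f.support.erase f.natDegree := by
            rwa [← eraseLead_support]
          have hem : e < m := by
            rcases Finset.mem_erase.mp he' with ⟨hne, hmem⟩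
            have := le_natDegree_of_ne_zero (mem_support_iff.mp hmem)
            omega
          have hqe : q * (e + 1) ≤ q * m := Nat.mul_le_mul (le_refl q) (by omega)
          have hqe' : q * (e + 1) = q * e + q := by ring
          have e3 : q * (a + c + e) = q * (a + c) + q * e := by ring
          have hlt : q * (a + c + e) + m * j < D := by omega
          exact ih _ hlt (a + c + e) j (by omega) rfl (by omega)
        have hmem : f.leadingCoeff • (x ^ i * y ^ j) ∈
            Lspace F q f m N * Lspace F q f m (s * N) := by
          have heq : f.leadingCoeff • (x ^ i * y ^ j) =
              ((x ^ a * y ^ b) * (x ^ c * y ^ d) + x ^ (a + c) * y ^ (j + 1)) -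
                ASof F q f f.eraseLead * (x ^ (a + c) * y ^ j) := by
            rw [hid, hsplit, add_sub_cancel_left]
          rw [heq]
          exact Submodule.sub_mem _ (Submodule.add_mem _ huv hB1) hB2
        have hxy : x ^ i * y ^ j =
            f.leadingCoeff⁻¹ • (f.leadingCoeff • (x ^ i * y ^ j)) := by
          rw [smul_smul, inv_mul_cancel₀ hlc, one_smul]
        rw [hxy]
        exact Submodule.smul_mem _ _ hmem

end Key

theorem stmt_11 (p k q : ℕ) (hp : p.Prime) (hk : 1 ≤ k) (hq : q = p ^ k)
    (F : Type*) [Field F] [CharP F p]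
    (f : F[X]) (m : ℕ) (hm : m = f.natDegree) (hm2 : 2 ≤ m) (hmp : Nat.Coprime m p) (t : ℕ) (ht : 1 ≤ t) (hdvd : m ∣ t * q + 1)
    (s : ℕ) (hs : m ≤ s) :
    Lspace F q f m (t * q + 1) * Lspace F q f m (s * (t * q + 1)) =
      Lspace F q f m ((s + 1) * (t * q + 1)) := by
  have hq2 : 2 ≤ q := by
    have hp2 := hp.two_le
    have : p ≤ p ^ k := Nat.le_self_pow (by omega) p
    omega
  obtain ⟨n, hn⟩ := hdvd
  set N := t * q + 1 with hN
  apply le_antisymm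
  · -- product ⊆ L((s+1)N)
    rw [Lspace, Lspace, Submodule.span_mul_span, Submodule.span_le]
    rintro r hr
    rw [Set.mem_mul] at hr
    obtain ⟨u, hu, v, hv, rfl⟩ := hr
    obtain ⟨i1, j1, hj1, hw1, rfl⟩ := hu
    obtain ⟨i2, j2, hj2, hw2, rfl⟩ := hv
    have hident : (ASx F q f ^ i1 * ASy F q f ^ j1) * (ASx F q f ^ i2 * ASy F q f ^ j2)
        = ASx F q f ^ (i1 + i2) * ASy F q f ^ (j1 + j2) := by
      rw [pow_add, pow_add]; ring
    rw [hident]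
    have e1 : q * (i1 + i2) = q * i1 + q * i2 := by ring
    have e2 : m * (j1 + j2) = m * j1 + m * j2 := by ring
    have e3 : (s + 1) * N = s * N + N := by ring
    exact SetLike.mem_coe.mpr
      (mem_L F q f m hq2 hm (i1 + i2) (j1 + j2) _ (by omega) (by omega))
  · -- L((s+1)N) ⊆ product
    rw [show Lspace F q f m ((s + 1) * N) =
      Submodule.span F {r | ∃ i j : ℕ, j ≤ q - 1 ∧ q * i + m * j ≤ (s + 1) * N ∧
        r = ASx F q f ^ i * ASy F q f ^ j} from rfl, Submodule.span_le]
    rintro r ⟨i, j, hj, hw, rfl⟩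
    exact SetLike.mem_coe.mpr
      (key_mem F q f m t s n hq2 hm2 ht hs hm hn (q * i + m * j) i j (by omega) rfl hw)
end
end

section
/- Let f(x) = x^m, let t ≥ 1 be an integer, assume m divides tq+1, set c := (tq+1)/m, and assume c ≤ q−1. Then for every integer s ≥ 1 and every integer b with 0 ≤ b ≤ (s+1)c, the element y^b lies in L(tq+1)·L(s(tq+1)), i.e., y^b is in the image of the multiplication map L(tq+1) ⊗ L(s(tq+1)) → L((s+1)(tq+1)). -/
open Polynomial

noncomputable section

lemma ASkey (F : Type*) [Field F] (q : ℕ) (f : F[X]) :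
    ASy F q f ^ q = AdjoinRoot.of _ f - ASy F q f := by
  have h := AdjoinRoot.eval₂_root ((X : (F[X])[X]) ^ q + X - C f)
  simp only [eval₂_sub, eval₂_add, eval₂_pow, eval₂_X, eval₂_C] at h
  unfold ASy
  linear_combination h

lemma mem_L_s12 (F : Type*) [Field F] (q : ℕ) (hq2 : 2 ≤ q) (m S i j : ℕ)
    (h : q * i + m * j ≤ S) :
    ASx F q (X ^ m) ^ i * ASy F q (X ^ m) ^ j ∈ Lspace F q (X ^ m) m S := by
  induction j using Nat.strong_induction_on generalizing i with
  | _ j ih =>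
    by_cases hj : j ≤ q - 1
    · exact Submodule.subset_span ⟨i, j, hj, h, rfl⟩
    · have hjq : q ≤ j := by omega
      have hkey : ASy F q ((X : F[X]) ^ m) ^ q = ASx F q (X ^ m) ^ m - ASy F q (X ^ m) := by
        rw [ASkey]
        congr 1
        simp [ASx, map_pow]
      have hxy : ASx F q ((X : F[X]) ^ m) ^ i * ASy F q (X ^ m) ^ j =
          ASx F q (X ^ m) ^ (i + m) * ASy F q (X ^ m) ^ (j - q) -
          ASx F q (X ^ m) ^ i * ASy F q (X ^ m) ^ (j - q + 1) := by
        conv_lhs => rw [show j = (j - q) + q by omega, pow_add, hkey]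
        ring
      rw [hxy]
      have e1 : q * (i + m) = q * i + q * m := Nat.mul_add q i m
      have e2 : m * (j - q) + m * q = m * j := by rw [← Nat.mul_add]; congr 1; omega
      have e3 : m * (j - q + 1) = m * (j - q) + m := by ring
      have e4 : m * q = q * m := Nat.mul_comm m q
      have e5 : m ≤ m * q := Nat.le_mul_of_pos_right m (by omega)
      exact sub_mem
        (ih (j - q) (by omega) (i + m) (by omega))
        (ih (j - q + 1) (by omega) i (by omega))

theorem stmt_12 (p k q : ℕ) (hp : p.Prime) (hk : 1 ≤ k) (hq : q = p ^ k)
    (F : Type*) [Field F] [CharP F p]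
    (m : ℕ) (hm2 : 2 ≤ m) (hmp : Nat.Coprime m p) (t : ℕ) (ht : 1 ≤ t) (hdvd : m ∣ t * q + 1)
    (c : ℕ) (hc : c = (t * q + 1) / m) (hcq : c ≤ q - 1)
    (s : ℕ) (hs : 1 ≤ s) (b : ℕ) (hb : b ≤ (s + 1) * c) :
    ASy F q (X ^ m) ^ b ∈
      Lspace F q (X ^ m) m (t * q + 1) * Lspace F q (X ^ m) m (s * (t * q + 1)) := by
  have hq2 : 2 ≤ q := by
    rw [hq]; exact Nat.one_lt_pow (by omega) hp.two_le
  have hmc : m * c = t * q + 1 := by rw [hc]; exact Nat.mul_div_cancel' hdvd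
  set b1 := min b c with hb1
  set b2 := b - b1 with hb2
  have hsc : (s + 1) * c = s * c + c := by ring
  have hmem1 : ASy F q ((X : F[X]) ^ m) ^ b1 ∈ Lspace F q (X ^ m) m (t * q + 1) := by
    refine Submodule.subset_span ⟨0, b1, by omega, ?_, by rw [pow_zero, one_mul]⟩
    have : m * b1 ≤ m * c := Nat.mul_le_mul_left m (by omega)
    omega
  have hmem2 : ASy F q ((X : F[X]) ^ m) ^ b2 ∈ Lspace F q (X ^ m) m (s * (t * q + 1)) := by
    have h2 : m * b2 ≤ s * (t * q + 1) := by
      have h3 : m * b2 ≤ m * (s * c) := Nat.mul_le_mul_left m (by omega)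
      calc m * b2 ≤ m * (s * c) := h3
        _ = s * (m * c) := by ring
        _ = s * (t * q + 1) := by rw [hmc]
    have := mem_L_s12 F q hq2 m (s * (t * q + 1)) 0 b2 (by omega)
    rwa [pow_zero, one_mul] at this
  have : ASy F q ((X : F[X]) ^ m) ^ b = ASy F q (X ^ m) ^ b1 * ASy F q (X ^ m) ^ b2 := by
    rw [← pow_add]; congr 1; omega
  rw [this]
  exact Submodule.mul_mem_mul hmem1 hmem2
end
end

section
/- Let f(x) = x^m, let t ≥ 1 be an integer, assume m divides tq+1, set c := (tq+1)/m, and assume c ≤ q−1. Then for every integer s ≥ 1 one has L(tq+1)·L(s(tq+1)) = L((s+1)(tq+1)); consequently, for every integer n ≥ 1 the n-fold product of L(tq+1) with itself equals L(n(tq+1)). (This says that the curve X_f, the image of C_f under the embedding defined by the complete linear system L((tq+1)Q∞), is projectively normal.) -/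
open Polynomial

noncomputable section

/-!
`L(a) L(b) ⊆ L(a + b)` because a monomial `x^i y^j` with `j ≥ q` is rewritten with
`y^q = x^m - y` into monomials of no larger weight `q i + m j`.

For the reverse inclusion put `a = tq + 1 = mc`. A monomial `x^I y^J` (`J < q`) of weight at most
`(s + 1) a` is a product of `y^c` (if `c ≤ J`), `x^t` (if `t ≤ I`) or `x^I` (otherwise), of weight
at most `a`, and a monomial of weight at most `s a` — except when `J < c` and the weight is
exactly `(s + 1) a`. Then `m ∣ q I`, so `m ∣ I`, and
`x^I y^J = x^(I-m) y^(J+1) + y^c · x^(I-m) y^(J+q-c)`, where the first monomial has smaller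
weight and the second has the factor `y^c` split off.
-/

theorem ASy_pow_add_ASy (F : Type*) [Field F] (q m : ℕ) :
    ASy F q (X ^ m) ^ q + ASy F q (X ^ m) = ASx F q (X ^ m) ^ m := by
  have h := AdjoinRoot.mk_self (f := (X : (F[X])[X]) ^ q + X - C (X ^ m))
  rwa [map_sub, map_add, sub_eq_zero, AdjoinRoot.mk_C, map_pow (AdjoinRoot.mk _) X,
    AdjoinRoot.mk_X, map_pow (AdjoinRoot.of _) X] at h

section MonomialSpan

variable (F : Type*) {A : Type*} [CommRing F] [CommRing A] [Algebra F A]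

/-- `L(s)` for an arbitrary pair `x, y`: `Lspace F q f m s` is the case `x = ASx F q f`,
`y = ASy F q f`. -/
def monomialSpan (x y : A) (q m s : ℕ) : Submodule F A :=
  Submodule.span F {r | ∃ i j : ℕ, j ≤ q - 1 ∧ q * i + m * j ≤ s ∧ r = x ^ i * y ^ j}

variable {F} {x y : A} {q m : ℕ}

local notation "𝓛" => monomialSpan F x y q m

theorem monomial_mem_monomialSpan {i j s : ℕ} (hj : j ≤ q - 1) (hw : q * i + m * j ≤ s) :
    x ^ i * y ^ j ∈ 𝓛 s :=
  Submodule.subset_span ⟨i, j, hj, hw, rfl⟩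

theorem monomial_mem_mul_monomialSpan {i j i' j' I J a b : ℕ} (hj : j ≤ q - 1)
    (hw : q * i + m * j ≤ a) (hj' : j' ≤ q - 1) (hw' : q * i' + m * j' ≤ b) (hI : i + i' = I)
    (hJ : j + j' = J) : x ^ I * y ^ J ∈ 𝓛 a * 𝓛 b := by
  rw [← hI, ← hJ, pow_add, pow_add, mul_mul_mul_comm]
  exact Submodule.mul_mem_mul (monomial_mem_monomialSpan hj hw) (monomial_mem_monomialSpan hj' hw')

theorem monomial_mem_monomialSpan_of_rel (hq : 2 ≤ q) (hxy : y ^ q + y = x ^ m) {i j s : ℕ}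
    (hw : q * i + m * j ≤ s) : x ^ i * y ^ j ∈ 𝓛 s := by
  induction j using Nat.strong_induction_on generalizing i with
  | _ j ih =>
    rcases le_or_gt j (q - 1) with hj | hj
    · exact monomial_mem_monomialSpan hj hw
    obtain ⟨j, rfl⟩ : ∃ j', j = j' + q := ⟨j - q, by omega⟩
    have hred : x ^ i * y ^ (j + q) = x ^ (i + m) * y ^ j - x ^ i * y ^ (j + 1) := by
      rw [pow_add x, ← hxy]; ring
    rw [hred]
    exact sub_mem (ih j (by omega) (by nlinarith)) (ih (j + 1) (by omega) (by nlinarith))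

theorem monomialSpan_mul_le (hq : 2 ≤ q) (hxy : y ^ q + y = x ^ m) (a b : ℕ) :
    𝓛 a * 𝓛 b ≤ 𝓛 (a + b) := by
  rw [monomialSpan, monomialSpan, Submodule.span_mul_span, Submodule.span_le]
  rintro _ ⟨_, ⟨i, j, -, hw, rfl⟩, _, ⟨i', j', -, hw', rfl⟩, rfl⟩
  dsimp only
  rw [SetLike.mem_coe, mul_mul_mul_comm, ← pow_add, ← pow_add]
  exact monomial_mem_monomialSpan_of_rel hq hxy (by linarith)

section ReverseInclusion

variable {t c s : ℕ}

theorem monomial_mem_mul_of_le_exponent (hmc : m * c = t * q + 1) (hcq : c ≤ q - 1) {I J : ℕ}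
    (hcJ : c ≤ J) (hJ : J ≤ q - 1) (hw : q * I + m * J ≤ (s + 1) * (t * q + 1)) :
    x ^ I * y ^ J ∈ 𝓛 (t * q + 1) * 𝓛 (s * (t * q + 1)) := by
  obtain ⟨J, rfl⟩ : ∃ J', J = c + J' := ⟨J - c, by omega⟩
  exact monomial_mem_mul_monomialSpan (i := 0) hcq (by simp [hmc]) (by omega) (by nlinarith)
    (zero_add I) rfl

theorem monomial_mem_mul_of_exponent_lt (hmc : m * c = t * q + 1) (hcq : c ≤ q - 1) (hs : 1 ≤ s)
    {I J : ℕ} (hJc : J < c) (hw : q * I + m * J < (s + 1) * (t * q + 1)) :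
    x ^ I * y ^ J ∈ 𝓛 (t * q + 1) * 𝓛 (s * (t * q + 1)) := by
  have hJ : J ≤ q - 1 := by omega
  have hyJ : m * J ≤ s * (t * q + 1) :=
    calc m * J ≤ m * c := Nat.mul_le_mul_left m hJc.le
      _ ≤ s * (t * q + 1) := hmc ▸ Nat.le_mul_of_pos_left _ hs
  rcases le_or_gt t I with htI | hIt
  · obtain ⟨I, rfl⟩ : ∃ I', I = t + I' := ⟨I - t, by omega⟩
    exact monomial_mem_mul_monomialSpan (j := 0) (Nat.zero_le _) (by nlinarith) hJ (by nlinarith)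
      rfl (zero_add J)
  · exact monomial_mem_mul_monomialSpan (i' := 0) (j := 0) (Nat.zero_le _) (by nlinarith) hJ
      (by simpa using hyJ) (add_zero I) (zero_add J)

theorem monomial_mem_mul_of_weight_lt (hmc : m * c = t * q + 1) (hcq : c ≤ q - 1) (hs : 1 ≤ s)
    {I J : ℕ} (hJ : J ≤ q - 1) (hw : q * I + m * J < (s + 1) * (t * q + 1)) :
    x ^ I * y ^ J ∈ 𝓛 (t * q + 1) * 𝓛 (s * (t * q + 1)) := by
  rcases le_or_gt c J with hcJ | hJc
  · exact monomial_mem_mul_of_le_exponent hmc hcq hcJ hJ hw.le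
  · exact monomial_mem_mul_of_exponent_lt hmc hcq hs hJc hw

theorem monomial_mem_mul_of_weight_eq (hq : 2 ≤ q) (hxy : y ^ q + y = x ^ m) (hco : m.Coprime q)
    (hmc : m * c = t * q + 1) (hcq : c ≤ q - 1) (hs : 1 ≤ s) {I J : ℕ} (hJc : J < c)
    (hw : q * I + m * J = (s + 1) * (t * q + 1)) :
    x ^ I * y ^ J ∈ 𝓛 (t * q + 1) * 𝓛 (s * (t * q + 1)) := by
  have hm : 0 < m := Nat.pos_of_ne_zero (by rintro rfl; omega)
  have hmI : m ∣ I := by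
    refine hco.dvd_of_dvd_mul_left ((Nat.dvd_add_left (dvd_mul_right m J)).mp ?_)
    exact ⟨(s + 1) * c, by rw [hw, ← hmc]; ring⟩
  have hI : I ≠ 0 := by
    rintro rfl
    have h1 : m * J < m * c := Nat.mul_lt_mul_of_pos_left hJc hm
    have h2 : t * q + 1 ≤ (s + 1) * (t * q + 1) := Nat.le_mul_of_pos_left _ s.succ_pos
    omega
  obtain ⟨I, rfl⟩ : ∃ I', I = m + I' := ⟨I - m, by have := Nat.le_of_dvd (by omega) hmI; omega⟩
  obtain ⟨e, he⟩ : ∃ e, q = c + e := ⟨q - c, by omega⟩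
  have hsplit : x ^ (m + I) * y ^ J = x ^ I * y ^ (J + 1) + x ^ I * y ^ (c + (J + e)) := by
    rw [pow_add x m, ← hxy, he]; ring
  rw [hsplit]
  refine add_mem (monomial_mem_mul_of_weight_lt hmc hcq hs (by omega) (by nlinarith)) ?_
  exact monomial_mem_mul_monomialSpan hcq (by simp [hmc]) (by omega) (by nlinarith) (zero_add I) rfl

theorem monomialSpan_mul_eq (hq : 2 ≤ q) (hxy : y ^ q + y = x ^ m) (hco : m.Coprime q)
    (hmc : m * c = t * q + 1) (hcq : c ≤ q - 1) (hs : 1 ≤ s) :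
    𝓛 (t * q + 1) * 𝓛 (s * (t * q + 1)) = 𝓛 ((s + 1) * (t * q + 1)) := by
  refine le_antisymm ((monomialSpan_mul_le hq hxy _ _).trans_eq (by congr 1; ring)) ?_
  refine Submodule.span_le.mpr ?_
  rintro _ ⟨I, J, hJ, hw, rfl⟩
  rcases hw.lt_or_eq with hw | hw
  · exact monomial_mem_mul_of_weight_lt hmc hcq hs hJ hw
  rcases le_or_gt c J with hcJ | hJc
  · exact monomial_mem_mul_of_le_exponent hmc hcq hcJ hJ hw.le
  · exact monomial_mem_mul_of_weight_eq hq hxy hco hmc hcq hs hJc hw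

theorem monomialSpan_pow_eq (hq : 2 ≤ q) (hxy : y ^ q + y = x ^ m) (hco : m.Coprime q)
    (hmc : m * c = t * q + 1) (hcq : c ≤ q - 1) {n : ℕ} (hn : 1 ≤ n) :
    𝓛 (t * q + 1) ^ n = 𝓛 (n * (t * q + 1)) := by
  induction n, hn using Nat.le_induction with
  | base => rw [pow_one, one_mul]
  | succ n hn ih => rw [pow_succ', ih, monomialSpan_mul_eq hq hxy hco hmc hcq hn]

end ReverseInclusion

end MonomialSpan

theorem stmt_13_general (p k q : ℕ) (hp : p.Prime) (hk : 1 ≤ k) (hq : q = p ^ k)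
    (F : Type*) [Field F]
    (m : ℕ) (hmp : Nat.Coprime m p) (t : ℕ) (hdvd : m ∣ t * q + 1)
    (c : ℕ) (hc : c = (t * q + 1) / m) (hcq : c ≤ q - 1) :
    (∀ s : ℕ, 1 ≤ s →
      Lspace F q (X ^ m) m (t * q + 1) * Lspace F q (X ^ m) m (s * (t * q + 1)) =
        Lspace F q (X ^ m) m ((s + 1) * (t * q + 1))) ∧
    (∀ n : ℕ, 1 ≤ n →
      (Lspace F q (X ^ m) m (t * q + 1)) ^ n =
        Lspace F q (X ^ m) m (n * (t * q + 1))) := by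
  have hq2 : 2 ≤ q := hq ▸ hp.two_le.trans (Nat.le_self_pow (by omega) p)
  have hco : m.Coprime q := hq ▸ hmp.pow_right k
  have hmc : m * c = t * q + 1 := hc ▸ Nat.mul_div_cancel' hdvd
  have hxy := ASy_pow_add_ASy F q m
  exact ⟨fun s hs => monomialSpan_mul_eq hq2 hxy hco hmc hcq hs,
    fun n hn => monomialSpan_pow_eq hq2 hxy hco hmc hcq hn⟩

theorem stmt_13 (p k q : ℕ) (hp : p.Prime) (hk : 1 ≤ k) (hq : q = p ^ k)
    (F : Type*) [Field F] [CharP F p]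
    (m : ℕ) (hm2 : 2 ≤ m) (hmp : Nat.Coprime m p) (t : ℕ) (ht : 1 ≤ t) (hdvd : m ∣ t * q + 1)
    (c : ℕ) (hc : c = (t * q + 1) / m) (hcq : c ≤ q - 1) :
    (∀ s : ℕ, 1 ≤ s →
      Lspace F q (X ^ m) m (t * q + 1) * Lspace F q (X ^ m) m (s * (t * q + 1)) =
        Lspace F q (X ^ m) m ((s + 1) * (t * q + 1))) ∧
    (∀ n : ℕ, 1 ≤ n →
      (Lspace F q (X ^ m) m (t * q + 1)) ^ n =
        Lspace F q (X ^ m) m (n * (t * q + 1))) :=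
  stmt_13_general p k q hp hk hq F m hmp t hdvd c hc hcq
end
end
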